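/- arXiv:2009.08967 — 3 statements merged into one kernel-verified Lean document; each statement's English description precedes it below -/
import Mathlib

section
/- For every δ > 0 and ε > 0 there exists a positive integer d = d(δ, ε) such that for every finite d-quasirandom group G and any three subsets A, B, C of G each of size at least δ·|G|, the number of triples (a, b, c) ∈ A × B × C with a·b = c is strictly greater than (1−ε)·|A|·|B|·|C|/|G|. -/
/-!
Let `f = 1_A - |A|/|G|` be the balanced indicator of `A` and `T v = f ∗ v` (convolution).
The number `N` of solutions of `a * b = c` equals `|A||B||C|/|G| + ⟪1_C, T 1_B⟫`, so it is enough
to bound `‖T‖`. The positive operator `T†T` commutes with right translations and, as `f` has mean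
zero, kills the constant functions; so each eigenspace of `T†T` for a non-zero eigenvalue is a
representation of `G` without invariant vectors, hence of dimension at least `d`. The eigenvalues
are non-negative with sum `tr (T†T) = |G| ‖f‖² ≤ |G||A|`, so each is at most `|G||A|/d`. This gives
`(N - |A||B||C|/|G|)² ≤ |G||A||B||C|/d`, which is below `(ε|A||B||C|/|G|)²` once `d > δ⁻³ε⁻²`.
-/

/-- A group `G` is `d`-quasirandom if every non-trivial finite-dimensional complex
representation of `G` has degree at least `d`. -/
def IsQuasirandom (G : Type*) [Group G] (d : ℕ) : Prop :=
  ∀ (V : Type) [AddCommGroup V] [Module ℂ V] [FiniteDimensional ℂ V],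
    ∀ ρ : G →* LinearMap.GeneralLinearGroup ℂ V, ρ ≠ 1 → d ≤ Module.finrank ℂ V

open Module Module.End Finset
open scoped InnerProductSpace

section Quasirandom

variable {G : Type*} [Group G] {d : ℕ} {V : Type} [AddCommGroup V] [Module ℂ V]
  [FiniteDimensional ℂ V]

theorem IsQuasirandom.le_finrank (hQ : IsQuasirandom G d) (ρ : Representation ℂ G V)
    (hρ : ρ ≠ 1) : d ≤ finrank ℂ V :=
  hQ V ρ.asGroupHom fun h => hρ <| MonoidHom.ext fun g => by
    simpa [Representation.asGroupHom_apply] using congrArg Units.val (DFunLike.congr_fun h g)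

theorem IsQuasirandom.le_finrank_eigenspace (hQ : IsQuasirandom G d) (ρ : Representation ℂ G V)
    {S : End ℂ V} (hSρ : ∀ g, Commute S (ρ g)) (hS : ∀ v ∈ ρ.invariants, S v = 0)
    {μ : ℂ} (hμ : μ ≠ 0) (hμS : HasEigenvalue S μ) :
    d ≤ finrank ℂ (eigenspace S μ) := by
  let W : Subrepresentation ρ := ⟨eigenspace S μ, fun g v hv => by
    rw [mem_eigenspace_iff] at hv ⊢
    rw [← mul_apply, (hSρ g).eq, mul_apply, hv, map_smul]⟩
  refine hQ.le_finrank W.toRepresentation fun htriv => hμS <| eq_bot_iff.2 fun v hv => ?_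
  have hinv : v ∈ ρ.invariants := fun g =>
    congrArg Subtype.val (LinearMap.congr_fun (DFunLike.congr_fun htriv g) ⟨v, hv⟩)
  have : μ • v = 0 := by rw [← mem_eigenspace_iff.mp hv, hS v hinv]
  exact (smul_eq_zero.mp this).resolve_left hμ

end Quasirandom

namespace LinearMap

variable {𝕜 E : Type*} [RCLike 𝕜] [NormedAddCommGroup E] [InnerProductSpace 𝕜 E]
  [FiniteDimensional 𝕜 E] {S : End 𝕜 E}

theorem IsPositive.mul_finrank_eigenspace_le_re_trace (hS : S.IsPositive) (μ : ℝ) :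
    μ * finrank 𝕜 (eigenspace S μ) ≤ RCLike.re (trace 𝕜 E S) := by
  rw [← hS.isSymmetric.card_filter_eigenvalues_eq rfl,
    hS.isSymmetric.re_trace_eq_sum_eigenvalues rfl]
  calc μ * #{i | (hS.isSymmetric.eigenvalues rfl i : 𝕜) = μ}
      = ∑ i with (hS.isSymmetric.eigenvalues rfl i : 𝕜) = μ, hS.isSymmetric.eigenvalues rfl i := by
        rw [sum_congr rfl fun i hi => (RCLike.ofReal_inj.mp (mem_filter.mp hi).2), sum_const,
          nsmul_eq_mul, mul_comm]
    _ ≤ ∑ i, hS.isSymmetric.eigenvalues rfl i :=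
        sum_le_sum_of_subset_of_nonneg (subset_univ _) fun i _ _ => hS.nonneg_eigenvalues rfl i

theorem IsSymmetric.re_inner_le_of_eigenvalues_le (hS : S.IsSymmetric) {n : ℕ}
    (hn : finrank 𝕜 E = n) {C : ℝ} (hC : ∀ i, hS.eigenvalues hn i ≤ C) (x : E) :
    RCLike.re ⟪x, S x⟫_𝕜 ≤ C * ‖x‖ ^ 2 := by
  set b := hS.eigenvectorBasis hn
  have hx : ‖x‖ ^ 2 = ∑ i, ‖b.repr x i‖ ^ 2 := by
    rw [← b.repr.norm_map, EuclideanSpace.norm_sq_eq]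
  have hSx : RCLike.re ⟪x, S x⟫_𝕜 = ∑ i, hS.eigenvalues hn i * ‖b.repr x i‖ ^ 2 := by
    rw [← b.repr.inner_map_map, PiLp.inner_apply, map_sum]
    refine sum_congr rfl fun i _ => ?_
    rw [hS.eigenvectorBasis_apply_self_apply, RCLike.inner_apply, mul_assoc, RCLike.mul_conj]
    norm_cast
  rw [hSx, hx, mul_sum]
  exact sum_le_sum fun i _ => mul_le_mul_of_nonneg_right (hC i) (by positivity)

theorem IsPositive.re_inner_le_of_le_finrank_eigenspace (hS : S.IsPositive) {d : ℕ} (hd : 0 < d)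
    (h : ∀ μ : ℝ, μ ≠ 0 → HasEigenvalue S μ → d ≤ finrank 𝕜 (eigenspace S μ)) (x : E) :
    RCLike.re ⟪x, S x⟫_𝕜 ≤ RCLike.re (trace 𝕜 E S) / d * ‖x‖ ^ 2 := by
  refine hS.isSymmetric.re_inner_le_of_eigenvalues_le rfl (fun i => ?_) x
  set μ := hS.isSymmetric.eigenvalues rfl i
  rw [le_div_iff₀ (by exact_mod_cast hd)]
  rcases eq_or_ne μ 0 with hμ | hμ
  · rw [hμ, zero_mul, hS.isSymmetric.re_trace_eq_sum_eigenvalues rfl]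
    exact sum_nonneg fun j _ => hS.nonneg_eigenvalues rfl j
  · have hdμ := h μ hμ (hS.isSymmetric.hasEigenvalue_eigenvalues rfl i)
    calc μ * d ≤ μ * finrank 𝕜 (eigenspace S μ) :=
          mul_le_mul_of_nonneg_left (mod_cast hdμ) (hS.nonneg_eigenvalues rfl i)
      _ ≤ RCLike.re (trace 𝕜 E S) := hS.mul_finrank_eigenspace_le_re_trace μ

end LinearMap

section IndicatorVector

variable {ι : Type*} [Fintype ι] [DecidableEq ι]

def indicatorVector (s : Finset ι) : EuclideanSpace ℂ ι :=
  WithLp.toLp 2 fun x => if x ∈ s then 1 else 0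

theorem inner_indicatorVector (s : Finset ι) (v : EuclideanSpace ℂ ι) :
    ⟪indicatorVector s, v⟫_ℂ = ∑ x ∈ s, v x := by
  simp [indicatorVector, PiLp.inner_apply]

theorem norm_sq_indicatorVector (s : Finset ι) : ‖indicatorVector s‖ ^ 2 = #s := by
  simp [EuclideanSpace.norm_sq_eq, indicatorVector, apply_ite]

end IndicatorVector

noncomputable section

variable {G : Type} [Group G] [Fintype G]

def rightTranslation (h : G) : EuclideanSpace ℂ G ≃ₗᵢ[ℂ] EuclideanSpace ℂ G :=
  LinearIsometryEquiv.piLpCongrLeft 2 ℂ ℂ (Equiv.mulRight h⁻¹)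

@[simp]
theorem rightTranslation_apply (h : G) (v : EuclideanSpace ℂ G) (x : G) :
    rightTranslation h v x = v (x * h) := by
  simp [rightTranslation, Equiv.piCongrLeft']

def rightRegular : Representation ℂ G (EuclideanSpace ℂ G) where
  toFun h := (rightTranslation h).toLinearMap
  map_one' := LinearMap.ext fun v => PiLp.ext fun x => by simp
  map_mul' a b := LinearMap.ext fun v => PiLp.ext fun x => by simp [mul_assoc]

theorem rightRegular_apply (h : G) (v : EuclideanSpace ℂ G) (x : G) :
    rightRegular h v x = v (x * h) :=
  rightTranslation_apply h v x

theorem apply_eq_of_mem_invariants_rightRegular {v : EuclideanSpace ℂ G}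
    (hv : v ∈ rightRegular.invariants) (x : G) : v x = v 1 := by
  simpa [rightRegular_apply] using congrArg (· 1) (hv x)

theorem commute_adjoint_rightRegular {T : End ℂ (EuclideanSpace ℂ G)}
    (hT : ∀ h, Commute T (rightRegular h)) (h : G) :
    Commute (LinearMap.adjoint T) (rightRegular h) := by
  have hadj : LinearMap.adjoint (rightRegular h⁻¹) = rightRegular h := by
    refine (rightTranslation h⁻¹).adjoint_toLinearMap_eq_symm.trans ?_
    ext v x
    simp [rightTranslation, rightRegular, Equiv.piCongrLeft']
  simpa [LinearMap.star_eq_adjoint, hadj] using (hT h⁻¹).star_star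

def convolutionOperator (f : G → ℂ) : End ℂ (EuclideanSpace ℂ G) where
  toFun v := WithLp.toLp 2 fun x => ∑ y, f (x * y⁻¹) * v y
  map_add' u v := by ext; simp [mul_add, sum_add_distrib]
  map_smul' c v := by ext; simp [mul_sum, mul_left_comm]

theorem convolutionOperator_apply (f : G → ℂ) (v : EuclideanSpace ℂ G) (x : G) :
    convolutionOperator f v x = ∑ y, f (x * y⁻¹) * v y :=
  rfl

theorem commute_convolutionOperator_rightRegular (f : G → ℂ) (h : G) :
    Commute (convolutionOperator f) (rightRegular h) := by
  ext v x
  simp only [mul_apply, convolutionOperator_apply, rightRegular_apply]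
  exact Fintype.sum_equiv (Equiv.mulRight h) _ _ fun y => by simp [mul_assoc]

theorem convolutionOperator_apply_of_mem_invariants {f : G → ℂ} (hf : ∑ x, f x = 0)
    {v : EuclideanSpace ℂ G} (hv : v ∈ rightRegular.invariants) :
    convolutionOperator f v = 0 := by
  ext x
  simp only [convolutionOperator_apply, apply_eq_of_mem_invariants_rightRegular hv, ← sum_mul]
  rw [Fintype.sum_equiv ((Equiv.inv G).trans (Equiv.mulLeft x)) (fun y => f (x * y⁻¹)) f
    fun _ => rfl, hf, zero_mul]
  rfl

theorem re_trace_adjoint_comp_convolutionOperator (f : G → ℂ) :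
    RCLike.re (LinearMap.trace ℂ _ (LinearMap.adjoint (convolutionOperator f) ∘ₗ
      convolutionOperator f)) = Fintype.card G * ∑ x, ‖f x‖ ^ 2 := by
  classical
  have hcol (x : G) :
      ‖convolutionOperator f (EuclideanSpace.single x 1)‖ ^ 2 = ∑ y, ‖f y‖ ^ 2 := by
    simp only [EuclideanSpace.norm_sq_eq, convolutionOperator_apply, PiLp.single_apply,
      mul_ite, mul_one, mul_zero, sum_ite_eq', mem_univ, if_true]
    exact Fintype.sum_equiv (Equiv.mulRight x⁻¹) _ _ fun _ => rfl
  rw [LinearMap.trace_eq_sum_inner _ (EuclideanSpace.basisFun G ℂ), map_sum]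
  simp only [LinearMap.comp_apply, LinearMap.adjoint_inner_right, inner_self_eq_norm_sq,
    EuclideanSpace.basisFun_apply, hcol, sum_const, card_univ, nsmul_eq_mul]

theorem IsQuasirandom.norm_sq_convolutionOperator_le {d : ℕ} (hQ : IsQuasirandom G d)
    (hd : 0 < d) {f : G → ℂ} (hf : ∑ x, f x = 0) (v : EuclideanSpace ℂ G) :
    ‖convolutionOperator f v‖ ^ 2 ≤ (Fintype.card G * ∑ x, ‖f x‖ ^ 2) / d * ‖v‖ ^ 2 := by
  set T := convolutionOperator f
  have hcomm (h : G) : Commute (LinearMap.adjoint T * T) (rightRegular h) :=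
    (commute_adjoint_rightRegular (commute_convolutionOperator_rightRegular f) h).mul_left
      (commute_convolutionOperator_rightRegular f h)
  have hker (v) (hv : v ∈ rightRegular.invariants) : (LinearMap.adjoint T * T) v = 0 := by
    rw [mul_apply, convolutionOperator_apply_of_mem_invariants hf hv, map_zero]
  have := T.isPositive_adjoint_comp_self.re_inner_le_of_le_finrank_eigenspace hd
    (fun μ hμ hμS => hQ.le_finrank_eigenspace rightRegular hcomm hker
      (Complex.ofReal_ne_zero.mpr hμ) hμS) v
  rwa [re_trace_adjoint_comp_convolutionOperator, LinearMap.comp_apply,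
    LinearMap.adjoint_inner_right, inner_self_eq_norm_sq] at this

variable [DecidableEq G]

theorem convolutionOperator_indicatorVector (f : G → ℂ) (s : Finset G) (x : G) :
    convolutionOperator f (indicatorVector s) x = ∑ y ∈ s, f (x * y⁻¹) := by
  simp [convolutionOperator_apply, indicatorVector]

def balancedIndicator (A : Finset G) (x : G) : ℝ :=
  (if x ∈ A then 1 else 0) - #A / Fintype.card G

theorem sum_balancedIndicator (A : Finset G) : ∑ x, balancedIndicator A x = 0 := by
  have hn : (Fintype.card G : ℝ) ≠ 0 := by positivity
  simp [balancedIndicator, sum_sub_distrib, mul_div_cancel₀ _ hn]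

theorem sum_balancedIndicator_sq_le (A : Finset G) : ∑ x, balancedIndicator A x ^ 2 ≤ #A := by
  set α : ℝ := #A / Fintype.card G
  have hsq (x : G) :
      balancedIndicator A x ^ 2 = (1 - 2 * α) * (if x ∈ A then 1 else 0) + α ^ 2 := by
    unfold balancedIndicator; split_ifs <;> ring
  simp only [hsq, sum_add_distrib, ← mul_sum, sum_boole, sum_const, card_univ, nsmul_eq_mul,
    filter_univ_mem]
  have hα : (Fintype.card G : ℝ) * α ^ 2 = α * #A := by
    have hn : (Fintype.card G : ℝ) ≠ 0 := by positivity
    simp only [α]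
    field_simp
  have : 0 ≤ α * #A := by positivity
  linarith

omit [Fintype G] in
theorem natCard_mul_eq_sum_sum (A B C : Finset G) :
    Nat.card {p : G × G × G // p.1 ∈ A ∧ p.2.1 ∈ B ∧ p.2.2 ∈ C ∧ p.1 * p.2.1 = p.2.2} =
      ∑ z ∈ C, ∑ y ∈ B, if z * y⁻¹ ∈ A then 1 else 0 := by
  let e : {p : G × G × G // p.1 ∈ A ∧ p.2.1 ∈ B ∧ p.2.2 ∈ C ∧ p.1 * p.2.1 = p.2.2} ≃
      {q // q ∈ (C ×ˢ B).filter fun q : G × G => q.1 * q.2⁻¹ ∈ A} :=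
    { toFun p := ⟨(p.1.2.2, p.1.2.1), mem_filter.2 ⟨mem_product.2 ⟨p.2.2.2.1, p.2.2.1⟩, by
        rw [← p.2.2.2.2, mul_inv_cancel_right]; exact p.2.1⟩⟩
      invFun q := ⟨(q.1.1 * q.1.2⁻¹, q.1.2, q.1.1), by
        have := mem_filter.1 q.2; simp_all [mem_product]⟩
      left_inv p := Subtype.ext <| Prod.ext (by simp [← p.2.2.2.2]) rfl
      right_inv q := rfl }
  rw [Nat.card_congr e, Nat.card_eq_finsetCard, card_filter, sum_product]

theorem sum_sum_balancedIndicator (A B C : Finset G) :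
    ∑ z ∈ C, ∑ y ∈ B, balancedIndicator A (z * y⁻¹) =
      (Nat.card {p : G × G × G // p.1 ∈ A ∧ p.2.1 ∈ B ∧ p.2.2 ∈ C ∧ p.1 * p.2.1 = p.2.2} : ℝ) -
        #A * #B * #C / Fintype.card G := by
  rw [natCard_mul_eq_sum_sum]
  simp only [balancedIndicator, sum_sub_distrib, sum_const, nsmul_eq_mul]
  push_cast
  ring

end

theorem IsQuasirandom.sq_natCard_sub_le {G : Type} [Group G] [Fintype G] {d : ℕ}
    (hQ : IsQuasirandom G d) (hd : 0 < d) (A B C : Finset G) :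
    ((Nat.card {p : G × G × G // p.1 ∈ A ∧ p.2.1 ∈ B ∧ p.2.2 ∈ C ∧ p.1 * p.2.1 = p.2.2} : ℝ) -
        #A * #B * #C / Fintype.card G) ^ 2 ≤ Fintype.card G * #A * #B * #C / d := by
  classical
  set f : G → ℂ := fun x => balancedIndicator A x
  have hf : ∑ x, f x = 0 := by simp [f, ← Complex.ofReal_sum, sum_balancedIndicator]
  have hf2 : ∑ x, ‖f x‖ ^ 2 ≤ #A := by
    simpa [f, Complex.norm_real, sq_abs] using sum_balancedIndicator_sq_le A
  have hcount : ⟪indicatorVector C, convolutionOperator f (indicatorVector B)⟫_ℂ =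
      ∑ z ∈ C, ∑ y ∈ B, balancedIndicator A (z * y⁻¹) := by
    simp [inner_indicatorVector, convolutionOperator_indicatorVector, f]
  have hT := hQ.norm_sq_convolutionOperator_le hd hf (indicatorVector B)
  rw [norm_sq_indicatorVector] at hT
  rw [← sum_sum_balancedIndicator]
  calc (∑ z ∈ C, ∑ y ∈ B, balancedIndicator A (z * y⁻¹)) ^ 2
      = ‖⟪indicatorVector C, convolutionOperator f (indicatorVector B)⟫_ℂ‖ ^ 2 := by
        rw [hcount, Complex.norm_real, Real.norm_eq_abs, sq_abs]
    _ ≤ (‖indicatorVector C‖ * ‖convolutionOperator f (indicatorVector B)‖) ^ 2 := by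
        gcongr; exact norm_inner_le_norm _ _
    _ ≤ #C * ((Fintype.card G * #A) / d * #B) := by
        rw [mul_pow, norm_sq_indicatorVector]
        gcongr
        exact hT.trans (by gcongr)
    _ = Fintype.card G * #A * #B * #C / d := by ring

theorem one_sub_mul_div_lt_of_sq_sub_le {N a b c n d δ ε : ℝ} (hδ : 0 < δ) (hε : 0 < ε)
    (hn : 0 < n) (ha : δ * n ≤ a) (hb : δ * n ≤ b) (hc : δ * n ≤ c)
    (hd : 1 / (δ ^ 3 * ε ^ 2) < d) (h : (N - a * b * c / n) ^ 2 ≤ n * a * b * c / d) :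
    (1 - ε) * a * b * c / n < N := by
  have hδn : 0 < δ * n := by positivity
  have ha0 : 0 < a := hδn.trans_le ha
  have hb0 : 0 < b := hδn.trans_le hb
  have habc : (δ * n) ^ 3 ≤ a * b * c := by
    rw [pow_three, ← mul_assoc]
    exact mul_le_mul (mul_le_mul ha hb hδn.le ha0.le) hc hδn.le (mul_pos ha0 hb0).le
  have habc0 : 0 < a * b * c := (pow_pos hδn 3).trans_le habc
  have hd0 : 0 < d := lt_trans (by positivity) hd
  have hcube : n ^ 3 < d * ε ^ 2 * (a * b * c) := by
    rw [div_lt_iff₀ (by positivity)] at hd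
    calc n ^ 3 < d * (δ ^ 3 * ε ^ 2) * n ^ 3 := lt_mul_left (by positivity) hd
      _ = d * ε ^ 2 * (δ * n) ^ 3 := by ring
      _ ≤ d * ε ^ 2 * (a * b * c) := by gcongr
  have hsq : (N - a * b * c / n) ^ 2 < (ε * (a * b * c) / n) ^ 2 := by
    refine h.trans_lt ?_
    rw [div_pow, div_lt_div_iff₀ hd0 (by positivity)]
    nlinarith [mul_lt_mul_of_pos_left hcube habc0]
  have hdev := (abs_lt.mp (abs_lt_of_sq_lt_sq hsq (by positivity))).1
  have hsplit : (1 - ε) * a * b * c / n = a * b * c / n - ε * (a * b * c) / n := by ring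
  linarith

theorem stmt_1 (δ ε : ℝ) (hδ : 0 < δ) (hε : 0 < ε) :
    ∃ d : ℕ, 0 < d ∧
      ∀ (G : Type) [Group G] [Fintype G], IsQuasirandom G d →
        ∀ A B C : Finset G,
          δ * Fintype.card G ≤ A.card →
          δ * Fintype.card G ≤ B.card →
          δ * Fintype.card G ≤ C.card →
          (1 - ε) * A.card * B.card * C.card / Fintype.card G <
            (Nat.card {p : G × G × G //
              p.1 ∈ A ∧ p.2.1 ∈ B ∧ p.2.2 ∈ C ∧ p.1 * p.2.1 = p.2.2} : ℝ) := by
  set d := ⌈1 / (δ ^ 3 * ε ^ 2)⌉₊ + 1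
  have hd : 1 / (δ ^ 3 * ε ^ 2) < d := by
    push_cast [d]
    linarith [Nat.le_ceil (1 / (δ ^ 3 * ε ^ 2))]
  have hd0 : 0 < d := Nat.succ_pos _
  refine ⟨d, hd0, fun G _ _ hQ A B C hA hB hC => ?_⟩
  exact one_sub_mul_div_lt_of_sq_sub_le hδ hε (by positivity) hA hB hC hd
    (hQ.sq_natCard_sub_le hd0 A B C)
end

section
/- For all positive real numbers δ and ε and every positive integer k there exists η = η(δ, ε, k) > 0 with the following property: for every finite group G, every subset A of G with |A| ≥ δ·|G|, and any three functions f₁, f₂, f₃ from A to G, each having all fibers of size at most k, such that |{a ∈ A : f₁(a)·f₂(a) = f₃(a)}| ≥ ε·|G|, the number of triples (a₁, a₂, a₃) ∈ A × A × A with f₁(a₁)·f₂(a₂) = f₃(a₃) is at least η·|G|². -/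
/-!
Keep only the solutions `a ∈ A` of `f₁ a * f₂ a = f₃ a`, and among them pass to a set `C`
on which `f₁`, `f₂`, `f₃` are injective; this loses a factor `k ^ 3`. In the tripartite graph on
three copies of `G` spanned by the triangles `(u, u * f₁ a, u * f₃ a)`, `u ∈ G`, `a ∈ C`, these
`|G| |C|` triangles are edge-disjoint: an edge determines `f₁ a`, `f₃ a` or, since
`f₁ a * f₂ a = f₃ a`, the quotient `f₂ a = (u * f₁ a)⁻¹ * (u * f₃ a)`, hence `a` and `u`.
So the graph is far from triangle-free, and the triangle removal lemma yields `≫ |G| ^ 3`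
triangles. Every triangle `(u, v, w)` has `u⁻¹ * v = f₁ a₁`, `v⁻¹ * w = f₂ a₂`,
`u⁻¹ * w = f₃ a₃` for a solution `(a₁, a₂, a₃) ∈ C ^ 3`, so there are `≫ |G| ^ 2` solutions.
-/

open Finset SimpleGraph SimpleGraph.TripartiteFromTriangles

namespace Finset

variable {α β : Type*} [DecidableEq β]

lemma exists_subset_injOn_card_le_mul {s : Finset α} {f : α → β} {k : ℕ}
    (hf : ∀ b, #{a ∈ s | f a = b} ≤ k) : ∃ t ⊆ s, Set.InjOn f t ∧ #s ≤ k * #t := by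
  obtain ⟨t, hts, hinj, himage⟩ := exists_subset_injOn_image_eq_of_surjOn (f := f) s (s.image f)
    (by rw [coe_image]; exact Set.surjOn_image f s)
  refine ⟨t, mod_cast hts, hinj, ?_⟩
  calc #s ≤ k * #(s.image f) := card_le_mul_card_image s k fun b _ ↦ hf b
    _ = k * #t := by rw [← himage, card_image_of_injOn hinj]

lemma exists_subset_injOn₃_card_le_pow_mul {A B : Finset α} {f₁ f₂ f₃ : α → β} {k : ℕ}
    (hBA : B ⊆ A) (h₁ : ∀ b, #{a ∈ A | f₁ a = b} ≤ k) (h₂ : ∀ b, #{a ∈ A | f₂ a = b} ≤ k)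
    (h₃ : ∀ b, #{a ∈ A | f₃ a = b} ≤ k) :
    ∃ C ⊆ B, Set.InjOn f₁ C ∧ Set.InjOn f₂ C ∧ Set.InjOn f₃ C ∧ #B ≤ k ^ 3 * #C := by
  have fiber_le {f : α → β} {s : Finset α} (hs : s ⊆ A) (h : ∀ b, #{a ∈ A | f a = b} ≤ k)
      (b : β) : #{a ∈ s | f a = b} ≤ k :=
    (card_le_card (filter_subset_filter _ hs)).trans (h b)
  obtain ⟨C₁, hC₁, i₁, c₁⟩ := exists_subset_injOn_card_le_mul (fiber_le hBA h₁)
  obtain ⟨C₂, hC₂, i₂, c₂⟩ := exists_subset_injOn_card_le_mul (fiber_le (hC₁.trans hBA) h₂)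
  obtain ⟨C₃, hC₃, i₃, c₃⟩ :=
    exists_subset_injOn_card_le_mul (fiber_le (hC₂.trans (hC₁.trans hBA)) h₃)
  refine ⟨C₃, hC₃.trans (hC₂.trans hC₁), i₁.mono (coe_subset.2 (hC₃.trans hC₂)),
    i₂.mono (coe_subset.2 hC₃), i₃, ?_⟩
  calc #B ≤ k * #C₁ := c₁
    _ ≤ k * (k * (k * #C₃)) := by gcongr; exact c₂.trans (by gcongr)
    _ = k ^ 3 * #C₃ := by ring

end Finset

namespace SimpleGraph.TripartiteFromTriangles

variable {α β γ : Type*} [DecidableEq α] [DecidableEq β] [DecidableEq γ]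

lemma exists_toTriangle_eq_of_is3Clique {t : Finset (α × β × γ)} {s : Finset (α ⊕ β ⊕ γ)}
    (hs : (graph t).IsNClique 3 s) :
    ∃ a b c, toTriangle (a, b, c) = s ∧
      (∃ c', (a, b, c') ∈ t) ∧ (∃ b', (a, b', c) ∈ t) ∧ ∃ a', (a', b, c) ∈ t := by
  obtain ⟨x, y, z, hxy, hxz, hyz, rfl⟩ := SimpleGraph.is3Clique_iff.1 hs
  obtain ⟨a, b, c, habc, hab, hac, hbc⟩ := graph_triple hxy hxz hyz
  exact ⟨a, b, c, habc, Graph.in₀₁_iff.1 hab, Graph.in₀₂_iff.1 hac, Graph.in₁₂_iff.1 hbc⟩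

end SimpleGraph.TripartiteFromTriangles

lemma inv_mul_mul_eq_of_mul_eq {G : Type*} [Group G] {x y z : G} (h : x * y = z) (u : G) :
    (u * x)⁻¹ * (u * z) = y := by
  rw [← h]; group

section MulTriangles

variable {G : Type*} [Group G] [Fintype G] [DecidableEq G]

def mulTriangles (f₁ f₃ : G → G) (B : Finset G) : Finset (G × G × G) :=
  (univ ×ˢ B).image fun p ↦ (p.1, p.1 * f₁ p.2, p.1 * f₃ p.2)

def solutions (f₁ f₂ f₃ : G → G) (B : Finset G) : Finset (G × G × G) :=
  {p | p.1 ∈ B ∧ p.2.1 ∈ B ∧ p.2.2 ∈ B ∧ f₁ p.1 * f₂ p.2.1 = f₃ p.2.2}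

variable {f₁ f₂ f₃ : G → G} {A B : Finset G} {u v w : G}

lemma mem_mulTriangles :
    (u, v, w) ∈ mulTriangles f₁ f₃ B ↔ ∃ a ∈ B, v = u * f₁ a ∧ w = u * f₃ a := by
  simp only [mulTriangles, mem_image, mem_product, mem_univ, true_and, Prod.exists, Prod.mk.injEq]
  constructor
  · rintro ⟨u, a, ha, rfl, rfl, rfl⟩
    exact ⟨a, ha, rfl, rfl⟩
  · rintro ⟨a, ha, rfl, rfl⟩
    exact ⟨u, a, ha, rfl, rfl, rfl⟩

lemma card_mulTriangles (h₁ : Set.InjOn f₁ B) :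
    #(mulTriangles f₁ f₃ B) = Fintype.card G * #B := by
  rw [mulTriangles, card_image_of_injOn, card_product, card_univ]
  rintro ⟨u, a⟩ ha ⟨u', a'⟩ ha' h
  simp only [coe_product, Set.mem_prod, mem_coe, Prod.mk.injEq] at ha ha' h
  obtain ⟨rfl, h, -⟩ := h
  rw [h₁ ha.2 ha'.2 (mul_left_cancel h)]

lemma explicitDisjoint_mulTriangles (h₁ : Set.InjOn f₁ B) (h₂ : Set.InjOn f₂ B)
    (h₃ : Set.InjOn f₃ B) (hB : ∀ a ∈ B, f₁ a * f₂ a = f₃ a) :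
    ExplicitDisjoint (mulTriangles f₁ f₃ B) where
  inj₀ u v w u' h h' := by
    obtain ⟨a, ha, hv, hw⟩ := mem_mulTriangles.1 h
    obtain ⟨a', ha', hv', hw'⟩ := mem_mulTriangles.1 h'
    have haa' : a = a' := h₂ ha ha' <| by
      rw [← inv_mul_mul_eq_of_mul_eq (hB a ha) u, ← inv_mul_mul_eq_of_mul_eq (hB a' ha') u',
        ← hv, ← hw, ← hv', ← hw']
    rw [haa'] at hv
    exact mul_right_cancel (hv.symm.trans hv')
  inj₁ u v w v' h h' := by
    obtain ⟨a, ha, hv, hw⟩ := mem_mulTriangles.1 h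
    obtain ⟨a', ha', hv', hw'⟩ := mem_mulTriangles.1 h'
    rw [hv, hv', h₃ ha ha' (mul_left_cancel (hw.symm.trans hw'))]
  inj₂ u v w w' h h' := by
    obtain ⟨a, ha, hv, hw⟩ := mem_mulTriangles.1 h
    obtain ⟨a', ha', hv', hw'⟩ := mem_mulTriangles.1 h'
    rw [hw, hw', h₁ ha ha' (mul_left_cancel (hv.symm.trans hv'))]

lemma card_cliqueFinset_graph_mulTriangles_le (hB : ∀ a ∈ B, f₁ a * f₂ a = f₃ a) :
    #((graph (mulTriangles f₁ f₃ B)).cliqueFinset 3) ≤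
      Fintype.card G * #(solutions f₁ f₂ f₃ B) := by
  calc _ ≤ #((univ ×ˢ solutions f₁ f₂ f₃ B).image
          fun q ↦ toTriangle (q.1, q.1 * f₁ q.2.1, q.1 * f₃ q.2.2.2)) :=
        card_le_card fun s hs ↦ ?_
    _ ≤ Fintype.card G * #(solutions f₁ f₂ f₃ B) :=
        card_image_le.trans (by rw [card_product, card_univ])
  obtain ⟨u, v, w, rfl, ⟨_, h₀₁⟩, ⟨_, h₀₂⟩, ⟨u', h₁₂⟩⟩ :=
    exists_toTriangle_eq_of_is3Clique (mem_cliqueFinset_iff.1 hs)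
  obtain ⟨a₁, ha₁, rfl, -⟩ := mem_mulTriangles.1 h₀₁
  obtain ⟨a₃, ha₃, -, rfl⟩ := mem_mulTriangles.1 h₀₂
  obtain ⟨a₂, ha₂, hv, hw⟩ := mem_mulTriangles.1 h₁₂
  have hsol : f₁ a₁ * f₂ a₂ = f₃ a₃ := by
    rw [← inv_mul_mul_eq_of_mul_eq (hB a₂ ha₂) u', ← hv, ← hw]
    group
  exact mem_image.2 ⟨(u, a₁, a₂, a₃), by simp [solutions, ha₁, ha₂, ha₃, hsol], rfl⟩

lemma le_card_solutions_of_injOn (h₁ : Set.InjOn f₁ B) (h₂ : Set.InjOn f₂ B)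
    (h₃ : Set.InjOn f₃ B) (hB : ∀ a ∈ B, f₁ a * f₂ a = f₃ a) {ε : ℝ}
    (hε : ε * Fintype.card G ≤ #B) :
    27 * triangleRemovalBound (ε / 9) * Fintype.card G ^ 2 ≤ #(solutions f₁ f₂ f₃ B) := by
  have := explicitDisjoint_mulTriangles h₁ h₂ h₃ hB
  set N := Fintype.card G with hN_def
  have hN : (0 : ℝ) < N := by positivity
  have hfar : (graph (mulTriangles f₁ f₃ B)).FarFromTriangleFree (ε / 9) := by
    apply farFromTriangleFree
    rw [card_mulTriangles h₁]
    calc (ε / 9 * ((N + N + N) ^ 2 : ℕ) : ℝ) = N * (ε * N) := by push_cast; ring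
      _ ≤ ((N * #B : ℕ) : ℝ) := by push_cast; gcongr
  refine le_of_mul_le_mul_left ?_ hN
  calc (N : ℝ) * (27 * triangleRemovalBound (ε / 9) * N ^ 2)
      = triangleRemovalBound (ε / 9) * (Fintype.card (G ⊕ G ⊕ G) : ℝ) ^ 3 := by
        simp only [Fintype.card_sum, ← hN_def]; push_cast; ring
    _ ≤ (#((graph (mulTriangles f₁ f₃ B)).cliqueFinset 3) : ℝ) := hfar.le_card_cliqueFinset
    _ ≤ (N : ℝ) * #(solutions f₁ f₂ f₃ B) := mod_cast card_cliqueFinset_graph_mulTriangles_le hB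

lemma solutions_mono (h : B ⊆ A) : solutions f₁ f₂ f₃ B ⊆ solutions f₁ f₂ f₃ A := by
  intro p hp
  simp only [solutions, mem_filter, mem_univ, true_and] at hp ⊢
  exact ⟨h hp.1, h hp.2.1, h hp.2.2.1, hp.2.2.2⟩

end MulTriangles

theorem stmt_7_general (δ ε : ℝ) (hε : 0 < ε) (k : ℕ) (hk : 0 < k) :
    ∃ η : ℝ, 0 < η ∧
      ∀ (G : Type) [Group G] [Fintype G] [DecidableEq G] (A : Finset G),
        δ * Fintype.card G ≤ A.card →
        ∀ f₁ f₂ f₃ : G → G,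
          (∀ g : G, (A.filter (fun a => f₁ a = g)).card ≤ k) →
          (∀ g : G, (A.filter (fun a => f₂ a = g)).card ≤ k) →
          (∀ g : G, (A.filter (fun a => f₃ a = g)).card ≤ k) →
          ε * Fintype.card G ≤ ((A.filter (fun a => f₁ a * f₂ a = f₃ a)).card : ℝ) →
          η * (Fintype.card G : ℝ) ^ 2 ≤
            (Nat.card {p : G × G × G //
              p.1 ∈ A ∧ p.2.1 ∈ A ∧ p.2.2 ∈ A ∧ f₁ p.1 * f₂ p.2.1 = f₃ p.2.2} : ℝ) := by
  refine ⟨27 * triangleRemovalBound (ε / k ^ 3 / 9), by positivity, ?_⟩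
  intro G _ _ _ A _ f₁ f₂ f₃ h₁ h₂ h₃ hB
  obtain ⟨C, hCB, i₁, i₂, i₃, hBC⟩ :=
    exists_subset_injOn₃_card_le_pow_mul (filter_subset (fun a ↦ f₁ a * f₂ a = f₃ a) A) h₁ h₂ h₃
  have hC : ∀ a ∈ C, f₁ a * f₂ a = f₃ a := fun a ha ↦ (mem_filter.1 (hCB ha)).2
  have hεC : ε / k ^ 3 * Fintype.card G ≤ #C := by
    rw [div_mul_eq_mul_div, div_le_iff₀ (by positivity), mul_comm (#C : ℝ)]
    exact hB.trans (mod_cast hBC)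
  calc _ ≤ (#(solutions f₁ f₂ f₃ C) : ℝ) := le_card_solutions_of_injOn i₁ i₂ i₃ hC hεC
    _ ≤ #(solutions f₁ f₂ f₃ A) :=
        mod_cast card_le_card (solutions_mono (hCB.trans (filter_subset _ A)))
    _ = _ := by rw [Nat.card_eq_fintype_card, Fintype.card_subtype]; rfl

theorem stmt_7 (δ ε : ℝ) (hδ : 0 < δ) (hε : 0 < ε) (k : ℕ) (hk : 0 < k) :
    ∃ η : ℝ, 0 < η ∧
      ∀ (G : Type) [Group G] [Fintype G] [DecidableEq G] (A : Finset G),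
        δ * Fintype.card G ≤ A.card →
        ∀ f₁ f₂ f₃ : G → G,
          (∀ g : G, (A.filter (fun a => f₁ a = g)).card ≤ k) →
          (∀ g : G, (A.filter (fun a => f₂ a = g)).card ≤ k) →
          (∀ g : G, (A.filter (fun a => f₃ a = g)).card ≤ k) →
          ε * Fintype.card G ≤ ((A.filter (fun a => f₁ a * f₂ a = f₃ a)).card : ℝ) →
          η * (Fintype.card G : ℝ) ^ 2 ≤
            (Nat.card {p : G × G × G //
              p.1 ∈ A ∧ p.2.1 ∈ A ∧ p.2.2 ∈ A ∧ f₁ p.1 * f₂ p.2.1 = f₃ p.2.2} : ℝ) :=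
  stmt_7_general δ ε hε k hk
end

section
/- For every positive integer k there exists ν = ν(k) > 0 with the following property: for every finite group G and every partition of G into k subsets (colors) A₁, ..., A_k, there exists an index j with 1 ≤ j ≤ k such that the number of triples (a, b, c) ∈ A_j × A_j × A_j with a·b = c is at least ν·|G|². -/
/-!
Colour each pair `i < j` of an `N`-tuple `x` of group elements by `c ((x i)⁻¹ * x j)`. For
`N = (k + 1) ^ (k + 2)`, Ramsey's theorem for triangles gives `a < b < d` whose three pairs have
one colour; since `(x a)⁻¹ * x b * ((x b)⁻¹ * x d) = (x a)⁻¹ * x d`, this is a monochromatic Schur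
triple. For fixed `a, b, d` the map `x ↦ ((x a)⁻¹ * x b, (x b)⁻¹ * x d)` has fibres of size
`|G| ^ (N - 2)`, so counting all `|G| ^ N` tuples yields at least `|G| ^ 2 / N ^ 3` monochromatic
Schur pairs, and some colour carries a `1 / k` share of them.
-/

open Finset

section Ramsey

variable {ι α : Type*} [LinearOrder ι] [Fintype α]

-- Greedy: `v 0` is the least element of `S`, and the rest of the sequence is chosen inside a
-- largest colour class of the edges leaving `v 0`.
theorem exists_seq_color_eq_of_pow_le_card (χ : ι → ι → α) (m : ℕ) (S : Finset ι)
    (hS : (Fintype.card α + 1) ^ m ≤ #S) :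
    ∃ v : ℕ → ι, (∀ i < m, v i ∈ S) ∧ (∀ i j, i < j → j < m → v i < v j) ∧
      ∀ i j l, i < j → j < l → l < m → χ (v i) (v j) = χ (v i) (v l) := by
  induction m generalizing S with
  | zero =>
    obtain ⟨s, -⟩ : S.Nonempty := card_pos.1 (by simpa using hS)
    exact ⟨fun _ => s, by omega, by omega, by omega⟩
  | succ m ih =>
    classical
    have hne : S.Nonempty := card_pos.1 (lt_of_lt_of_le (Nat.one_le_pow _ _ (by omega)) hS)
    set v₀ := S.min' hne
    have hv₀ : v₀ ∈ S := S.min'_mem hne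
    have hfiber : ∃ t ∈ (univ : Finset α),
        (Fintype.card α + 1) ^ m ≤ #{s ∈ S.erase v₀ | χ v₀ s = t} := by
      refine exists_le_card_fiber_of_mul_le_card_of_maps_to (fun _ _ => mem_univ _)
        ⟨χ v₀ v₀, mem_univ _⟩ ?_
      rw [card_univ, card_erase_of_mem hv₀, mul_comm]
      rw [pow_succ, mul_add_one] at hS
      have := Nat.one_le_pow m (Fintype.card α + 1) (by omega)
      omega
    obtain ⟨t, -, ht⟩ := hfiber
    obtain ⟨w, hwT, hw_lt, hw_col⟩ := ih _ ht
    have hw : ∀ i < m, w i ∈ S.erase v₀ ∧ χ v₀ (w i) = t := fun i hi => mem_filter.1 (hwT i hi)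
    refine ⟨fun | 0 => v₀ | n + 1 => w n, ?_, ?_, ?_⟩
    · rintro (_ | i) hi
      · exact hv₀
      · exact mem_of_mem_erase (hw i (by omega)).1
    · rintro (_ | i) (_ | j) hij hj
      · omega
      · have hj := (hw j (by omega)).1
        exact (S.min'_le _ (mem_of_mem_erase hj)).lt_of_ne (ne_of_mem_erase hj).symm
      · omega
      · exact hw_lt i j (by omega) (by omega)
    · rintro (_ | i) (_ | j) (_ | l) hij hjl hl
      all_goals try omega
      · exact (hw j (by omega)).2.trans (hw l (by omega)).2.symm
      · exact hw_col i j l (by omega) (by omega) (by omega)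

theorem exists_monochromatic_triangle [Fintype ι] (χ : ι → ι → α)
    (h : (Fintype.card α + 1) ^ (Fintype.card α + 2) ≤ Fintype.card ι) :
    ∃ a b d, a < b ∧ b < d ∧ χ a b = χ a d ∧ χ b d = χ a d := by
  obtain ⟨v, -, hv_lt, hv_col⟩ := exists_seq_color_eq_of_pow_le_card χ _ univ h
  obtain ⟨i, j, hij, hcol⟩ := Fintype.exists_ne_map_eq_of_card_lt
    (fun i : Fin (Fintype.card α + 1) => χ (v i) (v (Fintype.card α + 1))) (by simp)
  wlog hlt : i < j generalizing i j
  · exact this j i hij.symm hcol.symm (lt_of_le_of_ne (not_lt.1 hlt) hij.symm)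
  exact ⟨v i, v j, v (Fintype.card α + 1), hv_lt _ _ hlt (by omega),
    hv_lt _ _ (by omega) (by omega), hv_col _ _ _ hlt (by omega) (by omega), hcol.symm⟩

end Ramsey

section Counting

variable {G ι : Type*} [Group G] [Fintype G] [DecidableEq G] [Fintype ι]

theorem card_filter_quotients_eq_le [DecidableEq ι] {a b d : ι} (hab : a ≠ b) (had : a ≠ d)
    (hbd : b ≠ d) (p q : G) :
    #{x : ι → G | ((x a)⁻¹ * x b, (x b)⁻¹ * x d) = (p, q)} ≤
      Fintype.card G ^ (Fintype.card ι - 2) := by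
  have hinj : Set.InjOn (fun (x : ι → G) (i : ({b, d}ᶜ : Finset ι)) => x i)
      {x | ((x a)⁻¹ * x b, (x b)⁻¹ * x d) = (p, q)} := by
    intro x hx y hy hxy
    simp only [Set.mem_ofPred_eq, Prod.mk.injEq, inv_mul_eq_iff_eq_mul] at hx hy
    have hrest : ∀ i, i ≠ b → i ≠ d → x i = y i := fun i hib hid =>
      congrFun hxy ⟨i, by simp [hib, hid]⟩
    have hxa := hrest a hab had
    have hxb : x b = y b := by rw [hx.1, hy.1, hxa]
    funext i
    by_cases hib : i = b
    · rw [hib, hxb]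
    by_cases hid : i = d
    · rw [hid, hx.2, hy.2, hxb]
    exact hrest i hib hid
  calc _ ≤ #(univ : Finset (({b, d}ᶜ : Finset ι) → G)) :=
        card_le_card_of_injOn _ (fun _ _ => mem_univ _) (by simpa using hinj)
    _ = _ := by rw [card_univ, Fintype.card_fun, Fintype.card_coe, card_compl, card_pair hbd]

theorem card_filter_quotients_mem_le [DecidableEq ι] (D : Finset (G × G)) {a b d : ι} (hab : a ≠ b)
    (had : a ≠ d) (hbd : b ≠ d) :
    #{x : ι → G | ((x a)⁻¹ * x b, (x b)⁻¹ * x d) ∈ D} ≤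
      Fintype.card G ^ (Fintype.card ι - 2) * #D :=
  card_le_mul_card_image_of_maps_to (fun _ hx => (mem_filter.1 hx).2) _ fun pq _ =>
    (card_le_card fun _ hx => mem_filter.2 ⟨mem_univ _, (mem_filter.1 hx).2⟩).trans
      (card_filter_quotients_eq_le hab had hbd pq.1 pq.2)

theorem card_sq_le_of_forall_exists_quotients_mem [LinearOrder ι] (D : Finset (G × G))
    (hD : ∀ x : ι → G, ∃ a b d, a < b ∧ b < d ∧ ((x a)⁻¹ * x b, (x b)⁻¹ * x d) ∈ D) :
    Fintype.card G ^ 2 ≤ Fintype.card ι ^ 3 * #D := by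
  set n := Fintype.card G
  set N := Fintype.card ι
  let T : Finset (ι × ι × ι) := {t | t.1 < t.2.1 ∧ t.2.1 < t.2.2}
  let B (t : ι × ι × ι) : Finset (ι → G) :=
    {x | ((x t.1)⁻¹ * x t.2.1, (x t.2.1)⁻¹ * x t.2.2) ∈ D}
  have hcover : n ^ N ≤ ∑ t ∈ T, #(B t) :=
    calc n ^ N = #(univ : Finset (ι → G)) := by simp [n, N]
      _ ≤ #(T.biUnion B) := card_le_card fun x _ => by
          obtain ⟨a, b, d, hab, hbd, hx⟩ := hD x
          exact mem_biUnion.2 ⟨(a, b, d), by simp [T, hab, hbd], by simpa [B] using hx⟩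
      _ ≤ ∑ t ∈ T, #(B t) := card_biUnion_le
  have hB : ∀ t ∈ T, #(B t) ≤ n ^ (N - 2) * #D := fun t ht => by
    obtain ⟨h₁, h₂⟩ : t.1 < t.2.1 ∧ t.2.1 < t.2.2 := by simpa [T] using ht
    exact card_filter_quotients_mem_le D h₁.ne (h₁.trans h₂).ne h₂.ne
  have hT : #T ≤ N ^ 3 := (card_filter_le _ _).trans (by simp [N, pow_three])
  have hN : 2 ≤ N := by
    obtain ⟨a, b, -, hab, -⟩ := hD 1
    exact Fintype.one_lt_card_iff.2 ⟨a, b, hab.ne⟩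
  refine Nat.le_of_mul_le_mul_left ?_ (pow_pos Fintype.card_pos (N - 2) : 0 < n ^ (N - 2))
  calc n ^ (N - 2) * n ^ 2 = n ^ N := by rw [← pow_add, Nat.sub_add_cancel hN]
    _ ≤ #T * (n ^ (N - 2) * #D) := hcover.trans (sum_le_card_nsmul _ _ _ hB)
    _ ≤ N ^ 3 * (n ^ (N - 2) * #D) := Nat.mul_le_mul_right _ hT
    _ = n ^ (N - 2) * (N ^ 3 * #D) := by ring

end Counting

section Schur

variable {G α : Type*} [Group G] [Fintype G] [DecidableEq G] [DecidableEq α]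

def monoSchurPairs (c : G → α) (j : α) : Finset (G × G) :=
  {p | c p.1 = j ∧ c p.2 = j ∧ c (p.1 * p.2) = j}

theorem card_sq_le_sum_card_monoSchurPairs [Fintype α] (c : G → α) :
    Fintype.card G ^ 2 ≤
      ((Fintype.card α + 1) ^ (Fintype.card α + 2)) ^ 3 * ∑ j, #(monoSchurPairs c j) := by
  have h := card_sq_le_of_forall_exists_quotients_mem
    (ι := Fin ((Fintype.card α + 1) ^ (Fintype.card α + 2))) (univ.biUnion (monoSchurPairs c))
    fun x => by
      obtain ⟨a, b, d, hab, hbd, h₁, h₂⟩ :=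
        exists_monochromatic_triangle (fun i j => c ((x i)⁻¹ * x j)) (by simp)
      refine ⟨a, b, d, hab, hbd, mem_biUnion.2 ⟨c ((x a)⁻¹ * x d), mem_univ _, ?_⟩⟩
      simpa [monoSchurPairs, mul_assoc] using ⟨h₁, h₂⟩
  rw [Fintype.card_fin] at h
  exact h.trans (Nat.mul_le_mul_left _ card_biUnion_le)

theorem natCard_schurTriples_eq_card_monoSchurPairs (c : G → α) (j : α) :
    Nat.card {p : G × G × G // c p.1 = j ∧ c p.2.1 = j ∧ c p.2.2 = j ∧ p.1 * p.2.1 = p.2.2} =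
      #(monoSchurPairs c j) := by
  rw [Nat.card_eq_fintype_card, Fintype.card_subtype]
  refine card_nbij' (fun p => (p.1, p.2.1)) (fun p => (p.1, p.2, p.1 * p.2)) ?_ ?_ ?_ ?_
  · rintro ⟨a, b, _⟩ h
    simp_all [monoSchurPairs]
  · rintro ⟨a, b⟩ h
    simp_all [monoSchurPairs]
  · rintro ⟨a, b, _⟩ h
    simp_all
  · rintro ⟨a, b⟩ -
    rfl

end Schur

theorem stmt_8 (k : ℕ) (hk : 0 < k) :
    ∃ ν : ℝ, 0 < ν ∧
      ∀ (G : Type) [Group G] [Fintype G] (c : G → Fin k),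
        ∃ j : Fin k,
          ν * (Fintype.card G : ℝ) ^ 2 ≤
            (Nat.card {p : G × G × G //
              c p.1 = j ∧ c p.2.1 = j ∧ c p.2.2 = j ∧ p.1 * p.2.1 = p.2.2} : ℝ) := by
  classical
  set N := (k + 1) ^ (k + 2)
  have hkN : (0 : ℝ) < k * N ^ 3 := by positivity
  refine ⟨1 / (k * N ^ 3), by positivity, fun G _ _ c => ?_⟩
  have hcount := card_sq_le_sum_card_monoSchurPairs c
  rw [Fintype.card_fin] at hcount
  obtain ⟨j, -, hj⟩ := exists_le_of_sum_le (s := univ) ⟨c 1, mem_univ _⟩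
    (f := fun _ => ∑ i, #(monoSchurPairs c i)) (g := fun j => k * #(monoSchurPairs c j))
    (by simp [mul_sum])
  refine ⟨j, ?_⟩
  rw [natCard_schurTriples_eq_card_monoSchurPairs, one_div, inv_mul_le_iff₀ hkN]
  have hbound : Fintype.card G ^ 2 ≤ k * N ^ 3 * #(monoSchurPairs c j) :=
    hcount.trans (by rw [mul_comm k, mul_assoc]; exact Nat.mul_le_mul_left _ hj)
  exact_mod_cast hbound
end
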